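/- arXiv:2306.04961 — 4 statements merged into one kernel-verified Lean document; each statement's English description precedes it below -/
import Mathlib

section
/- For all τ > 0 and all real x, z, the inequality f_τ(z) ≤ f_τ(x) + (τ²/(2·max(x², τ²)))·(z² − x²) holds, where f_τ(t) = t²/2 for |t| ≤ τ and f_τ(t) = (τ²/2)·log(e·t²/τ²) for |t| > τ. -/
/-- The smoothed-logarithm function `f_τ`. -/
noncomputable def fSmooth (τ t : ℝ) : ℝ :=
  if |t| ≤ τ then t ^ 2 / 2 else (τ ^ 2 / 2) * Real.log (Real.exp 1 * t ^ 2 / τ ^ 2)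

/-!
In the variable `u = t² / τ²` one has `f_τ(t) = (τ² / 2) ψ(u)`, where `ψ = smoothLog` is `u` for
`u ≤ 1` and `1 + log u` beyond. This `ψ` is concave with derivative `1 / max u 1`, so it lies below
each of its tangent lines, which at `u = x² / τ²` is the claimed bound. Each case of the tangent
inequality reduces to `log w ≤ w - 1`.
-/

open Real

noncomputable def smoothLog (u : ℝ) : ℝ :=
  if u ≤ 1 then u else 1 + log u

theorem smoothLog_le_self (v : ℝ) : smoothLog v ≤ v := by
  unfold smoothLog
  split_ifs with hv
  · rfl
  · linarith [log_le_sub_one_of_pos (by linarith : 0 < v)]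

theorem smoothLog_le_tangent (u v : ℝ) : smoothLog v ≤ smoothLog u + (v - u) / max u 1 := by
  rcases le_or_gt u 1 with hu | hu
  · simpa [smoothLog, hu] using smoothLog_le_self v
  have hu0 : 0 < u := by linarith
  have hlog_u : 1 - 1 / u ≤ log u := by
    have hlog_inv := log_le_sub_one_of_pos (inv_pos.mpr hu0)
    rw [log_inv] at hlog_inv
    linarith [one_div u]
  have hslope : smoothLog u + (v - u) / max u 1 = log u + v / u := by
    rw [smoothLog, if_neg hu.not_ge, max_eq_left hu.le]
    field_simp
    ring
  rw [hslope, smoothLog]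
  split_ifs with hv
  · have hgap : 0 ≤ (1 - v) * (1 - 1 / u) :=
      mul_nonneg (by linarith) (by rw [sub_nonneg, div_le_one hu0]; exact hu.le)
    have hexpand : (1 - v) * (1 - 1 / u) = 1 - 1 / u + v / u - v := by ring
    linarith
  · have hlog_ratio := log_le_sub_one_of_pos (div_pos (by linarith : 0 < v) hu0)
    rw [log_div (by linarith) hu0.ne'] at hlog_ratio
    linarith

theorem fSmooth_eq_smoothLog {τ : ℝ} (hτ : 0 < τ) (t : ℝ) :
    fSmooth τ t = τ ^ 2 / 2 * smoothLog (t ^ 2 / τ ^ 2) := by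
  have hτ2 : 0 < τ ^ 2 := by positivity
  have hcase : |t| ≤ τ ↔ t ^ 2 / τ ^ 2 ≤ 1 := by
    rw [div_le_one hτ2, ← sq_abs, sq_le_sq₀ (abs_nonneg t) hτ.le]
  unfold fSmooth smoothLog
  by_cases ht : |t| ≤ τ
  · rw [if_pos ht, if_pos (hcase.mp ht)]
    field_simp
  · have hpos : 0 < t ^ 2 / τ ^ 2 := by linarith [not_le.mp (mt hcase.mpr ht)]
    rw [if_neg ht, if_neg (mt hcase.mpr ht), mul_div_assoc, log_mul (exp_ne_zero 1) hpos.ne',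
      log_exp]

/-- quadratic majorization of the smoothed logarithm. -/
theorem fSmooth_quadratic_majorization (τ x z : ℝ) (hτ : 0 < τ) :
    fSmooth τ z ≤ fSmooth τ x + (τ ^ 2 / (2 * max (x ^ 2) (τ ^ 2))) * (z ^ 2 - x ^ 2) := by
  have hτ2 : 0 < τ ^ 2 := by positivity
  have hmax : max (x ^ 2 / τ ^ 2) 1 = max (x ^ 2) (τ ^ 2) / τ ^ 2 := by
    rw [← max_div_div_right hτ2.le, div_self hτ2.ne']
  have htangent := mul_le_mul_of_nonneg_left
    (smoothLog_le_tangent (x ^ 2 / τ ^ 2) (z ^ 2 / τ ^ 2)) (by positivity : 0 ≤ τ ^ 2 / 2)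
  have hslope : τ ^ 2 / 2 * ((z ^ 2 / τ ^ 2 - x ^ 2 / τ ^ 2) / max (x ^ 2 / τ ^ 2) 1)
      = τ ^ 2 / (2 * max (x ^ 2) (τ ^ 2)) * (z ^ 2 - x ^ 2) := by
    have : 0 < max (x ^ 2) (τ ^ 2) := lt_max_of_lt_right hτ2
    rw [hmax]
    field_simp
  rw [fSmooth_eq_smoothLog hτ, fSmooth_eq_smoothLog hτ, ← hslope]
  linarith
end

section
/- Let A : ℝ^{n₁×n₂} → ℝ^m be linear and satisfy (1−δ)‖Z‖_F² ≤ ‖A(Z)‖₂² ≤ (1+δ)‖Z‖_F² for all Z of rank at most r with at most s nonzero rows, for some δ ∈ (0,1). Let T = T_{U,V,S} be a tangent space as in the simultaneous structure setting (U ∈ ℝ^{n₁×r} with row support S, |S| ≤ s, V ∈ ℝ^{n₂×r}, both with orthonormal columns), and let P_T denote the orthogonal projection onto T. Then every Ξ in the kernel of A satisfies ‖Ξ‖_F ≤ sqrt(1 + ‖A‖²/(1−δ)) · ‖(Id − P_T)(Ξ)‖_F, where ‖A‖ is the operator norm of A from Frobenius norm to Euclidean norm. -/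
open Matrix

/-- The Frobenius norm of a matrix. -/
noncomputable def frobNorm {n₁ n₂ : ℕ} (M : Matrix (Fin n₁) (Fin n₂) ℝ) : ℝ :=
  Real.sqrt (∑ i, ∑ j, (M i j) ^ 2)

/-- `P_S`: zero out all rows with index outside `S`. -/
def rowRestrict {n₁ n₂ : ℕ} (S : Finset (Fin n₁)) (Z : Matrix (Fin n₁) (Fin n₂) ℝ) :
    Matrix (Fin n₁) (Fin n₂) ℝ :=
  Matrix.of fun i j => if i ∈ S then Z i j else 0

/-- The orthogonal projection onto the tangent space `T_{U,V,S}`. -/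
noncomputable def tangentProjS {n₁ n₂ r : ℕ} (S : Finset (Fin n₁))
    (U : Matrix (Fin n₁) (Fin r) ℝ) (V : Matrix (Fin n₂) (Fin r) ℝ)
    (Z : Matrix (Fin n₁) (Fin n₂) ℝ) : Matrix (Fin n₁) (Fin n₂) ℝ :=
  U * Uᵀ * Z + rowRestrict S Z * V * Vᵀ - U * Uᵀ * Z * V * Vᵀ

lemma mulrow_zero {n₁ p q : ℕ} (W : Matrix (Fin n₁) (Fin p) ℝ) (M : Matrix (Fin p) (Fin q) ℝ)
    (i : Fin n₁) (h : ∀ k, W i k = 0) (j : Fin q) : (W * M) i j = 0 := by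
  simp [Matrix.mul_apply, h]

noncomputable def fip {n₁ n₂ : ℕ} (X Y : Matrix (Fin n₁) (Fin n₂) ℝ) : ℝ :=
  ∑ i, ∑ j, X i j * Y i j

lemma frob_nonneg {n₁ n₂ : ℕ} (M : Matrix (Fin n₁) (Fin n₂) ℝ) : 0 ≤ frobNorm M :=
  Real.sqrt_nonneg _

lemma frob_sq {n₁ n₂ : ℕ} (M : Matrix (Fin n₁) (Fin n₂) ℝ) :
    frobNorm M ^ 2 = fip M M := by
  rw [frobNorm, Real.sq_sqrt (by positivity)]
  simp [fip, sq]

lemma frob_sub_comm {n₁ n₂ : ℕ} (X Y : Matrix (Fin n₁) (Fin n₂) ℝ) :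
    frobNorm (X - Y) = frobNorm (Y - X) := by
  unfold frobNorm
  congr 1
  refine Finset.sum_congr rfl fun i _ => Finset.sum_congr rfl fun j _ => ?_
  simp [Matrix.sub_apply]; ring

lemma fip_pyth {n₁ n₂ : ℕ} (X P : Matrix (Fin n₁) (Fin n₂) ℝ) :
    fip X X = fip P P + fip (X - P) (X - P) + 2 * fip P (X - P) := by
  simp only [fip, Matrix.sub_apply, Finset.mul_sum, ← Finset.sum_add_distrib]
  refine Finset.sum_congr rfl fun i _ => Finset.sum_congr rfl fun j _ => by ring

lemma fip_eq_trace {n₁ n₂ : ℕ} (X Y : Matrix (Fin n₁) (Fin n₂) ℝ) :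
    fip X Y = Matrix.trace (Xᵀ * Y) := by
  simp only [Matrix.trace, Matrix.diag_apply, Matrix.mul_apply, Matrix.transpose_apply, fip]
  rw [Finset.sum_comm]

lemma transpose_mul_rowRestrict {n₁ n₂ r : ℕ} (S : Finset (Fin n₁))
    (W : Matrix (Fin n₁) (Fin r) ℝ) (hW : ∀ i ∉ S, ∀ k, W i k = 0)
    (Z : Matrix (Fin n₁) (Fin n₂) ℝ) : Wᵀ * rowRestrict S Z = Wᵀ * Z := by
  ext k j
  simp only [Matrix.mul_apply, Matrix.transpose_apply, rowRestrict, Matrix.of_apply]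
  refine Finset.sum_congr rfl fun i _ => ?_
  by_cases h : i ∈ S
  · simp [h]
  · simp [h, hW i h]

lemma rowRestrict_mul {n₁ n₂ p : ℕ} (S : Finset (Fin n₁))
    (X : Matrix (Fin n₁) (Fin p) ℝ) (M : Matrix (Fin p) (Fin n₂) ℝ) :
    rowRestrict S (X * M) = rowRestrict S X * M := by
  ext i j
  by_cases h : i ∈ S <;> simp [rowRestrict, Matrix.mul_apply, h]

lemma rowRestrict_idem {n₁ n₂ : ℕ} (S : Finset (Fin n₁)) (Z : Matrix (Fin n₁) (Fin n₂) ℝ) :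
    rowRestrict S (rowRestrict S Z) = rowRestrict S Z := by
  ext i j; by_cases h : i ∈ S <;> simp [rowRestrict, h]

lemma rowRestrict_eq_self {n₁ n₂ : ℕ} (S : Finset (Fin n₁)) (W : Matrix (Fin n₁) (Fin n₂) ℝ)
    (hW : ∀ i ∉ S, ∀ k, W i k = 0) : rowRestrict S W = W := by
  ext i j; by_cases h : i ∈ S <;> simp [rowRestrict, h]
  exact (hW i h j).symm

lemma rowRestrict_sub {n₁ n₂ : ℕ} (S : Finset (Fin n₁)) (X Y : Matrix (Fin n₁) (Fin n₂) ℝ) :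
    rowRestrict S (X - Y) = rowRestrict S X - rowRestrict S Y := by
  ext i j; by_cases h : i ∈ S <;> simp [rowRestrict, h]

lemma rowRestrict_add {n₁ n₂ : ℕ} (S : Finset (Fin n₁)) (X Y : Matrix (Fin n₁) (Fin n₂) ℝ) :
    rowRestrict S (X + Y) = rowRestrict S X + rowRestrict S Y := by
  ext i j; by_cases h : i ∈ S <;> simp [rowRestrict, h]

lemma ortho_key {n₁ n₂ r : ℕ} (S : Finset (Fin n₁)) (U : Matrix (Fin n₁) (Fin r) ℝ)
    (V : Matrix (Fin n₂) (Fin r) ℝ) (Z₁ : Matrix (Fin n₂) (Fin r) ℝ)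
    (Z₂ : Matrix (Fin n₁) (Fin r) ℝ) (N : Matrix (Fin n₁) (Fin n₂) ℝ)
    (hZ₂ : ∀ i ∉ S, ∀ k, Z₂ i k = 0)
    (h1 : Uᵀ * N = 0) (h2 : rowRestrict S N * V = 0) :
    fip (U * Z₁ᵀ + Z₂ * Vᵀ) N = 0 := by
  rw [fip_eq_trace]
  have e2 : Z₂ᵀ * N = Z₂ᵀ * rowRestrict S N := (transpose_mul_rowRestrict S Z₂ hZ₂ N).symm
  calc Matrix.trace ((U * Z₁ᵀ + Z₂ * Vᵀ)ᵀ * N)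
      = Matrix.trace (Z₁ * (Uᵀ * N)) + Matrix.trace (V * (Z₂ᵀ * N)) := by
        rw [Matrix.transpose_add, Matrix.transpose_mul, Matrix.transpose_mul,
          Matrix.transpose_transpose, Matrix.transpose_transpose, Matrix.add_mul,
          Matrix.trace_add, Matrix.mul_assoc, Matrix.mul_assoc]
    _ = 0 := by
        rw [h1, e2, Matrix.mul_zero, Matrix.trace_zero, zero_add,
          ← Matrix.mul_assoc, Matrix.trace_mul_cycle, h2,
          Matrix.zero_mul, Matrix.trace_zero]

/-- if `A` satisfies a lower restricted isometry bound on the tangent space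
`T = T_{U,V,S}` and has operator norm (Frobenius to ℓ₂) at most `C`, then every `Ξ ∈ ker A`
satisfies `‖Ξ‖_F ≤ √(1 + C²/(1−δ)) ‖(Id − P_T) Ξ‖_F`. -/
theorem kernel_bound_from_tangent_RIP {n₁ n₂ m r : ℕ}
    (A : Matrix (Fin n₁) (Fin n₂) ℝ →ₗ[ℝ] EuclideanSpace ℝ (Fin m))
    (δ C : ℝ) (hδ : δ ∈ Set.Ioo (0 : ℝ) 1)
    (U : Matrix (Fin n₁) (Fin r) ℝ) (V : Matrix (Fin n₂) (Fin r) ℝ) (S : Finset (Fin n₁))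
    (hU : Uᵀ * U = 1) (hV : Vᵀ * V = 1) (hUS : ∀ i ∉ S, ∀ k, U i k = 0)
    (T : Set (Matrix (Fin n₁) (Fin n₂) ℝ))
    (hT : T = {M : Matrix (Fin n₁) (Fin n₂) ℝ | ∃ (Z₁ : Matrix (Fin n₂) (Fin r) ℝ)
      (Z₂ : Matrix (Fin n₁) (Fin r) ℝ),
        (∀ i ∉ S, ∀ k, Z₂ i k = 0) ∧ M = U * Z₁ᵀ + Z₂ * Vᵀ})
    (hRIP : ∀ Z ∈ T, (1 - δ) * frobNorm Z ^ 2 ≤ ‖A Z‖ ^ 2)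
    (hC : ∀ Z, ‖A Z‖ ≤ C * frobNorm Z) :
    ∀ Ξ : Matrix (Fin n₁) (Fin n₂) ℝ, A Ξ = 0 →
      frobNorm Ξ ≤ Real.sqrt (1 + C ^ 2 / (1 - δ)) * frobNorm (Ξ - tangentProjS S U V Ξ) := by

  intro Ξ hΞ
  have h1δ : (0:ℝ) < 1 - δ := by linarith [hδ.2]
  set P := tangentProjS S U V Ξ with hPdef
  -- support facts
  have hUr : rowRestrict S U = U := rowRestrict_eq_self S U hUS
  -- the two components of P
  set Z₁ : Matrix (Fin n₂) (Fin r) ℝ := Ξᵀ * U with hZ₁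
  set Z₂ : Matrix (Fin n₁) (Fin r) ℝ := rowRestrict S Ξ * V - U * Uᵀ * Ξ * V with hZ₂
  have hZ₂S : ∀ i ∉ S, ∀ k, Z₂ i k = 0 := by
    intro i hi k
    have hrow : ∀ j, rowRestrict S Ξ i j = 0 := by intro j; simp [rowRestrict, hi]
    have e1 : (rowRestrict S Ξ * V) i k = 0 := mulrow_zero _ V i hrow k
    have e2 : (U * Uᵀ * Ξ * V) i k = 0 := by
      have ha : U * Uᵀ * Ξ * V = U * (Uᵀ * (Ξ * V)) := by simp only [Matrix.mul_assoc]
      rw [ha]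
      exact mulrow_zero U _ i (hUS i hi) k
    simp only [hZ₂, Matrix.sub_apply, e1, e2, sub_zero]
  have hPrepr : P = U * Z₁ᵀ + Z₂ * Vᵀ := by
    simp only [hPdef, tangentProjS, hZ₁, hZ₂, Matrix.transpose_mul,
      Matrix.transpose_transpose, Matrix.sub_mul, Matrix.mul_assoc]
    abel
  have hPT : P ∈ T := by
    rw [hT]
    exact ⟨Z₁, Z₂, hZ₂S, hPrepr⟩
  -- Uᵀ kills the residual
  have h1 : Uᵀ * (Ξ - P) = 0 := by
    have e2 : Uᵀ * rowRestrict S Ξ = Uᵀ * Ξ := transpose_mul_rowRestrict S U hUS Ξ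
    simp only [hPdef, tangentProjS, Matrix.mul_sub, Matrix.mul_add, ← Matrix.mul_assoc]
    rw [hU, Matrix.one_mul, e2]
    abel
  -- rowRestrict residual times V vanishes
  have h2 : rowRestrict S (Ξ - P) * V = 0 := by
    simp only [hPdef, tangentProjS, rowRestrict_sub, rowRestrict_add, rowRestrict_mul,
      rowRestrict_idem, hUr]
    simp only [Matrix.sub_mul, Matrix.add_mul, Matrix.mul_assoc, hV, Matrix.mul_one]
    abel
  have horto : fip P (Ξ - P) = 0 := by
    nth_rewrite 1 [hPrepr]
    exact ortho_key S U V Z₁ Z₂ (Ξ - P) hZ₂S h1 h2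
  have hpyth : frobNorm Ξ ^ 2 = frobNorm P ^ 2 + frobNorm (Ξ - P) ^ 2 := by
    rw [frob_sq, frob_sq, frob_sq, fip_pyth Ξ P, horto]; ring
  have hAP : ‖A P‖ ≤ C * frobNorm (Ξ - P) := by
    have hA : A P = A (P - Ξ) := by rw [map_sub, hΞ, sub_zero]
    rw [hA]
    calc ‖A (P - Ξ)‖ ≤ C * frobNorm (P - Ξ) := hC _
      _ = C * frobNorm (Ξ - P) := by rw [frob_sub_comm]
  have hPsq : frobNorm P ^ 2 ≤ C ^ 2 / (1 - δ) * frobNorm (Ξ - P) ^ 2 := by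
    have hRP := hRIP P hPT
    have hAP2 : ‖A P‖ ^ 2 ≤ (C * frobNorm (Ξ - P)) ^ 2 :=
      pow_le_pow_left₀ (norm_nonneg _) hAP 2
    rw [div_mul_eq_mul_div, le_div_iff₀ h1δ]
    nlinarith [hRP, hAP2]
  have hfinal : frobNorm Ξ ^ 2 ≤ (1 + C ^ 2 / (1 - δ)) * frobNorm (Ξ - P) ^ 2 := by
    nlinarith [hpyth, hPsq]
  have hco : (0:ℝ) ≤ 1 + C ^ 2 / (1 - δ) := by positivity
  calc frobNorm Ξ = Real.sqrt (frobNorm Ξ ^ 2) := (Real.sqrt_sq (frob_nonneg _)).symm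
    _ ≤ Real.sqrt ((1 + C ^ 2 / (1 - δ)) * frobNorm (Ξ - P) ^ 2) := Real.sqrt_le_sqrt hfinal
    _ = Real.sqrt (1 + C ^ 2 / (1 - δ)) * Real.sqrt (frobNorm (Ξ - P) ^ 2) :=
        Real.sqrt_mul hco _
    _ = Real.sqrt (1 + C ^ 2 / (1 - δ)) * frobNorm (Ξ - P) := by
        rw [Real.sqrt_sq (frob_nonneg _)]
end

section
/- Let W_sp ∈ ℝ^{n₁×n₁} be the diagonal matrix with entries (W_sp)_{ii} = max(‖X^{(k)}_{i,:}‖₂²/δ², 1)^{−1} for a matrix X^{(k)} ∈ ℝ^{n₁×n₂} and δ > 0. Let X_⋆ ∈ ℝ^{n₁×n₂} have exactly s nonzero rows, and suppose max_{i} ‖X^{(k)}_{i,:} − (X_⋆)_{i,:}‖₂ ≤ ζ·ρ_s(X_⋆) for some 0 < ζ < 1/2, where ρ_s(X_⋆) is the s-th largest row ℓ₂-norm of X_⋆. Assume additionally δ ≤ ρ_{s+1}(X^{(k)}), i.e. all s rows of X^{(k)} supported on the support of X_⋆ have ℓ₂-norm at least δ. Then the row-sum norm satisfies ‖W_sp ·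 X_⋆‖_{1,2} := Σ_i ‖(W_sp · X_⋆)_{i,:}‖₂ ≤ s·δ² / ((1−ζ)²·ρ_s(X_⋆)). -/
/-- The ℓ₂-norm of the i-th row of a matrix. -/
noncomputable def rowNorm {n₁ n₂ : ℕ} (X : Matrix (Fin n₁) (Fin n₂) ℝ) (i : Fin n₁) : ℝ :=
  Real.sqrt (∑ j, (X i j) ^ 2)

/-!
For `i` in the support, write `r = ‖X^{(k)}_{i,:}‖₂`, `a = ‖(X_⋆)_{i,:}‖₂`. The weight is at most
`δ² / r²`, and the triangle inequality with `ρ ≤ a` gives both `(1 - ζ) a ≤ r` and `(1 - ζ) ρ ≤ r`,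
hence `r² ≥ (1 - ζ)² ρ a`. So each of the `s` nonzero weighted rows has norm
`a / max (r² / δ², 1) ≤ δ² / ((1 - ζ)² ρ)`, and the rows off the support vanish.
-/

open Finset

section RowNorm

variable {n₁ n₂ : ℕ}

lemma rowNorm_eq_norm (X : Matrix (Fin n₁) (Fin n₂) ℝ) (i : Fin n₁) :
    rowNorm X i = ‖WithLp.toLp 2 (X i)‖ := by
  simp [rowNorm, EuclideanSpace.norm_eq, sq_abs]

lemma rowNorm_pos_iff (X : Matrix (Fin n₁) (Fin n₂) ℝ) (i : Fin n₁) :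
    0 < rowNorm X i ↔ ∃ j, X i j ≠ 0 := by
  rw [rowNorm_eq_norm, norm_pos_iff, Ne, WithLp.toLp_eq_zero, funext_iff]
  push Not
  rfl

lemma rowNorm_le_add_rowNorm_sub (A B : Matrix (Fin n₁) (Fin n₂) ℝ) (i : Fin n₁) :
    rowNorm B i ≤ rowNorm A i + rowNorm (A - B) i := by
  have hrow : (A - B) i = A i - B i := rfl
  simpa only [rowNorm_eq_norm, hrow, WithLp.toLp_sub]
    using norm_le_norm_add_norm_sub (WithLp.toLp 2 (A i)) (WithLp.toLp 2 (B i))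

lemma rowNorm_of_mul (c : Fin n₁ → ℝ) (X : Matrix (Fin n₁) (Fin n₂) ℝ) (i : Fin n₁) :
    rowNorm (Matrix.of fun i j => c i * X i j) i = |c i| * rowNorm X i := by
  simp only [rowNorm, Matrix.of_apply, mul_pow, ← Finset.mul_sum]
  rw [Real.sqrt_mul (sq_nonneg _), Real.sqrt_sq_eq_abs]

lemma sum_rowNorm_le_card_mul {X : Matrix (Fin n₁) (Fin n₂) ℝ} {S : Finset (Fin n₁)} {C : ℝ}
    (h_zero : ∀ i ∉ S, ∀ j, X i j = 0) (h_le : ∀ i ∈ S, rowNorm X i ≤ C) :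
    ∑ i, rowNorm X i ≤ S.card * C := by
  rw [← sum_subset (subset_univ S) fun i _ hi => by simp [rowNorm, h_zero i hi]]
  simpa using sum_le_card_nsmul S _ C h_le

end RowNorm

lemma one_sub_sq_mul_mul_le_sq_of_le_add {r a ρ ζ : ℝ} (hζ₀ : 0 ≤ ζ) (hζ₁ : ζ ≤ 1) (hρ : 0 ≤ ρ)
    (hρa : ρ ≤ a) (har : a ≤ r + ζ * ρ) : (1 - ζ) ^ 2 * ρ * a ≤ r ^ 2 := by
  have hρr : (1 - ζ) * ρ ≤ r := by linarith
  have har' : (1 - ζ) * a ≤ r := by nlinarith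
  calc (1 - ζ) ^ 2 * ρ * a = ((1 - ζ) * ρ) * ((1 - ζ) * a) := by ring
    _ ≤ r * r := mul_le_mul hρr har' (by nlinarith) ((mul_nonneg (by linarith) hρ).trans hρr)
    _ = r ^ 2 := (sq r).symm

lemma inv_max_sq_div_sq_one_mul_le {r a δ c : ℝ} (hδ : δ ≠ 0) (hc : 0 < c) (har : c * a ≤ r ^ 2) :
    (max (r ^ 2 / δ ^ 2) 1)⁻¹ * a ≤ δ ^ 2 / c := by
  have hM : 0 < max (r ^ 2 / δ ^ 2) 1 := lt_max_of_lt_right one_pos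
  rw [inv_mul_eq_div, div_le_div_iff₀ hM hc]
  calc a * c ≤ r ^ 2 := by linarith
    _ = δ ^ 2 * (r ^ 2 / δ ^ 2) := by field_simp
    _ ≤ δ ^ 2 * max (r ^ 2 / δ ^ 2) 1 := by gcongr; exact le_max_left _ _

theorem sparsity_weight_row_sum_bound_general {n₁ n₂ s : ℕ}
    (Xk Xstar : Matrix (Fin n₁) (Fin n₂) ℝ) (δ ζ ρ : ℝ)
    (hδ : 0 < δ) (hζ₁ : 0 < ζ) (hζ₂ : ζ < 1 / 2)
    (S : Finset (Fin n₁)) (hS : ∀ i, i ∈ S ↔ ∃ j, Xstar i j ≠ 0) (hcard : S.card = s)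
    (hρ₁ : ∀ i ∈ S, ρ ≤ rowNorm Xstar i) (hρ₂ : ∃ i ∈ S, rowNorm Xstar i = ρ)
    (hclose : ∀ i, rowNorm (Xk - Xstar) i ≤ ζ * ρ) :
    ∑ i, rowNorm (Matrix.of fun i' j' => (max ((rowNorm Xk i') ^ 2 / δ ^ 2) 1)⁻¹ * Xstar i' j') i
      ≤ s * δ ^ 2 / ((1 - ζ) ^ 2 * ρ) := by
  obtain ⟨i₀, hi₀, hρ_eq⟩ := hρ₂
  have hρ : 0 < ρ := hρ_eq ▸ (rowNorm_pos_iff Xstar i₀).2 ((hS i₀).1 hi₀)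
  have hζ : 0 < 1 - ζ := by linarith
  have hc : 0 < (1 - ζ) ^ 2 * ρ := by positivity
  rw [← hcard, mul_div_assoc]
  refine sum_rowNorm_le_card_mul (fun i hi j => ?_) fun i hi => ?_
  · have hrow : ∀ j, Xstar i j = 0 := by simpa using (hS i).not.1 hi
    simp [hrow j]
  · rw [rowNorm_of_mul, abs_of_nonneg (by positivity)]
    have hnear : rowNorm Xstar i ≤ rowNorm Xk i + ζ * ρ :=
      (rowNorm_le_add_rowNorm_sub Xk Xstar i).trans (by linarith [hclose i])
    exact inv_max_sq_div_sq_one_mul_le hδ.ne' hc <|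
      one_sub_sq_mul_mul_le_sq_of_le_add hζ₁.le (by linarith) hρ.le (hρ₁ i hi) hnear

/-- bound on the row-sum norm `‖W_sp · X_⋆‖_{1,2}` of the sparsity-weighted ground
truth, where `W_sp = diag(max(‖X^{(k)}_{i,:}‖₂²/δ², 1)⁻¹)`, `X_⋆` has exactly `s` nonzero rows with
row support `S`, `ρ` is the `s`-th largest row ℓ₂-norm of `X_⋆`, `‖X^{(k)} − X_⋆‖_{∞,2} ≤ ζ·ρ`
with `0 < ζ < 1/2`, and all rows of `X^{(k)}` supported on `S` have ℓ₂-norm at least `δ`. -/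
theorem sparsity_weight_row_sum_bound {n₁ n₂ s : ℕ}
    (Xk Xstar : Matrix (Fin n₁) (Fin n₂) ℝ) (δ ζ ρ : ℝ)
    (hδ : 0 < δ) (hζ₁ : 0 < ζ) (hζ₂ : ζ < 1 / 2)
    (S : Finset (Fin n₁)) (hS : ∀ i, i ∈ S ↔ ∃ j, Xstar i j ≠ 0) (hcard : S.card = s)
    (hρ₁ : ∀ i ∈ S, ρ ≤ rowNorm Xstar i) (hρ₂ : ∃ i ∈ S, rowNorm Xstar i = ρ)
    (hclose : ∀ i, rowNorm (Xk - Xstar) i ≤ ζ * ρ)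
    (hdelta : ∀ i ∈ S, δ ≤ rowNorm Xk i) :
    ∑ i, rowNorm (Matrix.of fun i' j' => (max ((rowNorm Xk i') ^ 2 / δ ^ 2) 1)⁻¹ * Xstar i' j') i
      ≤ s * δ ^ 2 / ((1 - ζ) ^ 2 * ρ) :=
  sparsity_weight_row_sum_bound_general Xk Xstar δ ζ ρ hδ hζ₁ hζ₂ S hS hcard hρ₁ hρ₂ hclose
end

section
/- Let U ∈ ℝ^{n₁×r_k} and V ∈ ℝ^{n₂×r_k} have orthonormal columns, with orthonormal complements U_⊥ and V_⊥, and let H ∈ ℝ^{n₁×n₂} be any matrix whose lower-right (n₁−r_k)×(n₂−r_k) block is identically equal to a constant c. Define the linear operator W(Z) = [U U_⊥]·(H ∘ ([U U_⊥]ᵀ Z [V V_⊥]))·[V V_⊥]ᵀ, where ∘ is the entrywise (Hadamard) product. Then W maps the tangent space T_{U,V} = {U Z₁ᵀ + Z₂ Vᵀ} into itself, and maps its orthogonal complement T_{U,V}^⊥ = { U_⊥ M V_⊥ᵀ : M ∈ ℝ^{(n₁−r_k)×(n₂−r_k)} } into itself; in fact W(U_⊥ M V_⊥ᵀ) = c·U_⊥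 M V_⊥ᵀ. -/
open Matrix

noncomputable def weightOp {n₁ n₂ rk p₁ p₂ : ℕ}
    (U : Matrix (Fin n₁) (Fin rk) ℝ) (Up : Matrix (Fin n₁) (Fin p₁) ℝ)
    (V : Matrix (Fin n₂) (Fin rk) ℝ) (Vp : Matrix (Fin n₂) (Fin p₂) ℝ)
    (H₁₁ : Matrix (Fin rk) (Fin rk) ℝ) (H₁₂ : Matrix (Fin rk) (Fin p₂) ℝ)
    (H₂₁ : Matrix (Fin p₁) (Fin rk) ℝ) (c : ℝ)
    (Z : Matrix (Fin n₁) (Fin n₂) ℝ) : Matrix (Fin n₁) (Fin n₂) ℝ :=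
  U * (Matrix.hadamard H₁₁ (Uᵀ * Z * V)) * Vᵀ
    + U * (Matrix.hadamard H₁₂ (Uᵀ * Z * Vp)) * Vpᵀ
    + Up * (Matrix.hadamard H₂₁ (Upᵀ * Z * V)) * Vᵀ
    + c • (Up * (Upᵀ * Z * Vp) * Vpᵀ)

/-- if `[U U⊥]` and `[V V⊥]` are orthogonal matrices, then the weight operator maps
the tangent space `T_{U,V} = {U Z₁ᵀ + Z₂ Vᵀ}` into itself and acts on its orthogonal complement
`{U⊥ M V⊥ᵀ}` as multiplication by `c`. -/
theorem weightOp_preserves_tangent_spaces {n₁ n₂ rk p₁ p₂ : ℕ}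
    (U : Matrix (Fin n₁) (Fin rk) ℝ) (Up : Matrix (Fin n₁) (Fin p₁) ℝ)
    (V : Matrix (Fin n₂) (Fin rk) ℝ) (Vp : Matrix (Fin n₂) (Fin p₂) ℝ)
    (H₁₁ : Matrix (Fin rk) (Fin rk) ℝ) (H₁₂ : Matrix (Fin rk) (Fin p₂) ℝ)
    (H₂₁ : Matrix (Fin p₁) (Fin rk) ℝ) (c : ℝ)
    (hU : Uᵀ * U = 1) (hUp : Upᵀ * Up = 1) (hUUp : Uᵀ * Up = 0)
    (hUcomplete : U * Uᵀ + Up * Upᵀ = 1)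
    (hV : Vᵀ * V = 1) (hVp : Vpᵀ * Vp = 1) (hVVp : Vᵀ * Vp = 0)
    (hVcomplete : V * Vᵀ + Vp * Vpᵀ = 1) :
    (∀ (Z₁ : Matrix (Fin n₂) (Fin rk) ℝ) (Z₂ : Matrix (Fin n₁) (Fin rk) ℝ),
      ∃ (Y₁ : Matrix (Fin n₂) (Fin rk) ℝ) (Y₂ : Matrix (Fin n₁) (Fin rk) ℝ),
        weightOp U Up V Vp H₁₁ H₁₂ H₂₁ c (U * Z₁ᵀ + Z₂ * Vᵀ) = U * Y₁ᵀ + Y₂ * Vᵀ) ∧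
    (∀ M : Matrix (Fin p₁) (Fin p₂) ℝ,
      weightOp U Up V Vp H₁₁ H₁₂ H₂₁ c (Up * M * Vpᵀ) = c • (Up * M * Vpᵀ)) := by
  have hUpU : Upᵀ * U = 0 := by
    have := congrArg Matrix.transpose hUUp
    simpa [Matrix.transpose_mul] using this
  have hVpV : Vpᵀ * V = 0 := by
    have := congrArg Matrix.transpose hVVp
    simpa [Matrix.transpose_mul] using this
  constructor
  · intro Z₁ Z₂
    set Z := U * Z₁ᵀ + Z₂ * Vᵀ with hZ
    refine ⟨Vp * (Matrix.hadamard H₁₂ (Uᵀ * Z * Vp))ᵀ,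
      U * (Matrix.hadamard H₁₁ (Uᵀ * Z * V)) + Up * (Matrix.hadamard H₂₁ (Upᵀ * Z * V)), ?_⟩
    have h4 : Upᵀ * Z * Vp = 0 := by
      simp [hZ, Matrix.mul_add, Matrix.add_mul, Matrix.mul_assoc, ← Matrix.mul_assoc Upᵀ U,
        hUpU, hVVp]
    rw [weightOp, h4]
    rw [Matrix.mul_zero Up, Matrix.zero_mul, smul_zero, add_zero, Matrix.transpose_mul,
      Matrix.transpose_transpose, Matrix.add_mul]
    simp only [Matrix.mul_assoc]
    abel
  · intro M
    have e1 : Uᵀ * (Up * M * Vpᵀ) * V = 0 := by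
      simp [← Matrix.mul_assoc, hUUp]
    have e2 : Uᵀ * (Up * M * Vpᵀ) * Vp = 0 := by
      simp [← Matrix.mul_assoc, hUUp]
    have e3 : Upᵀ * (Up * M * Vpᵀ) * V = 0 := by
      simp [Matrix.mul_assoc, hVpV]
    have e4 : Upᵀ * (Up * M * Vpᵀ) * Vp = M := by
      rw [← Matrix.mul_assoc, ← Matrix.mul_assoc, hUp, Matrix.one_mul, Matrix.mul_assoc, hVp,
        Matrix.mul_one]
    rw [weightOp, e1, e2, e3, e4]
    simp [Matrix.mul_assoc]
end
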